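/- For independent standard normal random variables P and Q and D > 2, the probability that sgn(P - Q/√(D-1)) ≠ sgn(Q - P/√(D-1)) equals 1/2 + (2/π)·arctan(1/√(D-1)), and this quantity is at least 1/2 + (2/π)·(1/√D). -/

import Mathlib

/-!
Write `c = 1 / √(D - 1) ∈ (0, 1)`. The signs of `P - c Q` and `Q - c P` agree exactly when `(P, Q)`
lies in the cone `{x > 0, c x < y < x / c}`, in its negative, or at the origin. In polar
coordinates the standard Gaussian on the plane has density `r e^{-r²/2} / (2π)`, so a cone of
opening angle `α` has mass `α / (2π)`; here `α = arctan (1 / c) - arctan c = π / 2 - 2 arctan c`.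
The inequality is `sin (arctan c) ≤ arctan c`, as `sin (arctan c) = 1 / √D`.
-/

open MeasureTheory ProbabilityTheory Real Set

local notation "γ₂" => Measure.prod (gaussianReal 0 1) (gaussianReal 0 1)

lemma gaussianReal_prod_eq_withDensity :
    γ₂ = volume.withDensity (fun p => gaussianPDF 0 1 p.1 * gaussianPDF 0 1 p.2) := by
  rw [gaussianReal_of_var_ne_zero _ one_ne_zero,
    prod_withDensity (measurable_gaussianPDF _ _) (measurable_gaussianPDF _ _),
    Measure.volume_eq_prod]

lemma gaussianPDF_mul_gaussianPDF_polarCoord_symm (p : ℝ × ℝ) :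
    gaussianPDF 0 1 (polarCoord.symm p).1 * gaussianPDF 0 1 (polarCoord.symm p).2 =
      ENNReal.ofReal (exp (-(p.1 ^ 2 / 2)) / (2 * π)) := by
  simp only [gaussianPDF, gaussianPDFReal, polarCoord_symm_apply, NNReal.coe_one, mul_one,
    sub_zero]
  rw [← ENNReal.ofReal_mul (by positivity), mul_mul_mul_comm, ← mul_inv,
    mul_self_sqrt (by positivity), ← exp_add, inv_mul_eq_div]
  congr 3
  linear_combination (-p.1 ^ 2 / 2) * sin_sq_add_cos_sq p.2

lemma lintegral_Ioi_mul_exp_neg_sq_div_two :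
    ∫⁻ r in Ioi (0 : ℝ), ENNReal.ofReal (r * exp (-(r ^ 2 / 2))) = 1 := by
  have hreal : ∫ r in Ioi (0 : ℝ), r * exp (-(r ^ 2 / 2)) = 1 := by
    have h := integral_mul_cexp_neg_mul_sq (b := 1 / 2) (by norm_num)
    apply Complex.ofReal_injective
    rw [← integral_complex_ofReal]
    convert h using 1
    · congr 1 with r
      push_cast
      ring_nf
    · norm_num
  rw [← ofReal_integral_eq_lintegral_ofReal, hreal, ENNReal.ofReal_one]
  · exact ((integrable_mul_exp_neg_mul_sq (b := 1 / 2) (by norm_num)).integrableOn).congr_fun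
      (fun r _ => by ring_nf) measurableSet_Ioi
  · filter_upwards [ae_restrict_mem measurableSet_Ioi] with r hr
    exact mul_nonneg (le_of_lt hr) (exp_pos _).le

lemma gaussianReal_prod_real_of_polarCoord_symm_mem_iff {S : Set (ℝ × ℝ)} {T : Set ℝ}
    (hS : MeasurableSet S) (hT : MeasurableSet T) (hTπ : T ⊆ Ioo (-π) π)
    (hST : ∀ p ∈ polarCoord.target, polarCoord.symm p ∈ S ↔ p.2 ∈ T) :
    (γ₂).real S = volume.real T / (2 * π) := by
  set c := ENNReal.ofReal (2 * π)⁻¹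
  have hpolar : ∀ p ∈ polarCoord.target,
      ENNReal.ofReal p.1 • S.indicator (fun q => gaussianPDF 0 1 q.1 * gaussianPDF 0 1 q.2)
          (polarCoord.symm p) =
        ENNReal.ofReal (p.1 * exp (-(p.1 ^ 2 / 2))) * T.indicator (fun _ => c) p.2 := by
    intro p hp
    by_cases hpT : p.2 ∈ T
    · rw [indicator_of_mem ((hST p hp).mpr hpT), indicator_of_mem hpT,
        gaussianPDF_mul_gaussianPDF_polarCoord_symm, smul_eq_mul, ← ENNReal.ofReal_mul hp.1.le,
        ← ENNReal.ofReal_mul (mul_pos hp.1 (exp_pos _)).le, div_eq_mul_inv, mul_assoc]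
    · rw [indicator_of_notMem (fun h => hpT ((hST p hp).mp h)), indicator_of_notMem hpT,
        smul_zero, mul_zero]
  have hγ : γ₂ S = volume T * c := by
    rw [gaussianReal_prod_eq_withDensity, withDensity_apply _ hS, ← lintegral_indicator hS,
      ← lintegral_comp_polarCoord_symm,
      setLIntegral_congr_fun polarCoord.open_target.measurableSet hpolar]
    change ∫⁻ p in Ioi 0 ×ˢ Ioo (-π) π, _ = _
    rw [Measure.volume_eq_prod, ← Measure.prod_restrict,
      lintegral_prod_mul (f := fun r => ENNReal.ofReal (r * exp (-(r ^ 2 / 2))))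
        (g := T.indicator fun _ => c) (by fun_prop) ((measurable_const.indicator hT).aemeasurable),
      lintegral_Ioi_mul_exp_neg_sq_div_two, one_mul, lintegral_indicator_const hT,
      Measure.restrict_apply hT, inter_eq_left.mpr hTπ, mul_comm]
  rw [measureReal_def, hγ, ENNReal.toReal_mul, ENNReal.toReal_ofReal (by positivity),
    measureReal_def, div_eq_mul_inv]

lemma cos_pos_iff_of_mem_Ioo {θ : ℝ} (hθ : θ ∈ Ioo (-π) π) :
    0 < cos θ ↔ θ ∈ Ioo (-(π / 2)) (π / 2) := by
  refine ⟨fun hcos => ?_, cos_pos_of_mem_Ioo⟩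
  rw [mem_Ioo, ← abs_lt]
  by_contra! h
  rw [← cos_abs] at hcos
  exact hcos.not_ge (cos_nonpos_of_pi_div_two_le_of_le h (by linarith [abs_lt.mpr hθ]))

lemma lt_tan_iff_arctan_lt {a θ : ℝ} (hθ : θ ∈ Ioo (-(π / 2)) (π / 2)) :
    a < tan θ ↔ arctan a < θ := by
  conv_rhs => rw [← arctan_tan hθ.1 hθ.2]
  exact arctan_lt_arctan_iff.symm

lemma tan_lt_iff_lt_arctan {b θ : ℝ} (hθ : θ ∈ Ioo (-(π / 2)) (π / 2)) :
    tan θ < b ↔ θ < arctan b := by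
  conv_rhs => rw [← arctan_tan hθ.1 hθ.2]
  exact arctan_lt_arctan_iff.symm

lemma polarCoord_symm_mem_cone_iff {a b : ℝ} {p : ℝ × ℝ} (hp : p ∈ polarCoord.target) :
    polarCoord.symm p ∈ {q : ℝ × ℝ | 0 < q.1 ∧ a * q.1 < q.2 ∧ q.2 < b * q.1} ↔
      p.2 ∈ Ioo (arctan a) (arctan b) := by
  obtain ⟨r, θ⟩ := p
  obtain ⟨hr, hθ⟩ : 0 < r ∧ θ ∈ Ioo (-π) π := hp
  have hcone : (0 < r * cos θ ∧ a * (r * cos θ) < r * sin θ ∧ r * sin θ < b * (r * cos θ)) ↔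
      (0 < cos θ ∧ a < tan θ ∧ tan θ < b) := by
    rw [mul_pos_iff_of_pos_left hr]
    refine and_congr_right fun hc => ?_
    rw [tan_eq_sin_div_cos, lt_div_iff₀ hc, div_lt_iff₀ hc, mul_left_comm,
      mul_lt_mul_iff_right₀ hr, mul_left_comm, mul_lt_mul_iff_right₀ hr]
  simp only [polarCoord_symm_apply, mem_ofPred_eq, hcone, cos_pos_iff_of_mem_Ioo hθ]
  constructor
  · rintro ⟨hθ', ha, hb⟩
    exact ⟨(lt_tan_iff_arctan_lt hθ').mp ha, (tan_lt_iff_lt_arctan hθ').mp hb⟩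
  · rintro ⟨ha, hb⟩
    have hθ' : θ ∈ Ioo (-(π / 2)) (π / 2) :=
      ⟨(neg_pi_div_two_lt_arctan a).trans ha, hb.trans (arctan_lt_pi_div_two b)⟩
    exact ⟨hθ', (lt_tan_iff_arctan_lt hθ').mpr ha, (tan_lt_iff_lt_arctan hθ').mpr hb⟩

lemma measurableSet_cone (a b : ℝ) :
    MeasurableSet {q : ℝ × ℝ | 0 < q.1 ∧ a * q.1 < q.2 ∧ q.2 < b * q.1} :=
  (measurableSet_lt measurable_const measurable_fst).inter
    ((measurableSet_lt (by fun_prop) measurable_snd).inter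
      (measurableSet_lt measurable_snd (by fun_prop)))

lemma gaussianReal_prod_real_cone {a b : ℝ} (hab : a ≤ b) :
    (γ₂).real {q : ℝ × ℝ | 0 < q.1 ∧ a * q.1 < q.2 ∧ q.2 < b * q.1} =
      (arctan b - arctan a) / (2 * π) := by
  have hsub : Ioo (arctan a) (arctan b) ⊆ Ioo (-π) π :=
    Ioo_subset_Ioo (by linarith [neg_pi_div_two_lt_arctan a, pi_pos])
      (by linarith [arctan_lt_pi_div_two b, pi_pos])
  rw [gaussianReal_prod_real_of_polarCoord_symm_mem_iff (measurableSet_cone a b)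
    measurableSet_Ioo hsub (fun p hp => polarCoord_symm_mem_cone_iff hp),
    volume_real_Ioo_of_le (arctan_strictMono.monotone hab)]

instance isNegInvariant_gaussianReal_prod : Measure.IsNegInvariant γ₂ := by
  constructor
  change Measure.map (Prod.map (fun x : ℝ => -x) (fun x : ℝ => -x)) γ₂ = γ₂
  rw [← Measure.map_prod_map _ _ measurable_neg measurable_neg, gaussianReal_map_neg, neg_zero]

lemma measurable_real_sign : Measurable Real.sign := by
  unfold Real.sign
  exact measurable_const.ite measurableSet_Iio
    (measurable_const.ite measurableSet_Ioi measurable_const)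

lemma real_sign_eq_real_sign_iff {u v : ℝ} :
    Real.sign u = Real.sign v ↔ (0 < u ∧ 0 < v) ∨ (u < 0 ∧ v < 0) ∨ (u = 0 ∧ v = 0) := by
  rcases lt_trichotomy u 0 with hu | rfl | hu <;> rcases lt_trichotomy v 0 with hv | rfl | hv <;>
    simp only [Real.sign_of_neg, Real.sign_of_pos, Real.sign_zero, *] <;>
    grind

lemma mk_mem_cone_iff {c : ℝ} (hc0 : 0 < c) (hc1 : c < 1) {x y : ℝ} :
    (x, y) ∈ {q : ℝ × ℝ | 0 < q.1 ∧ c * q.1 < q.2 ∧ q.2 < c⁻¹ * q.1} ↔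
      0 < x - c * y ∧ 0 < y - c * x := by
  rw [mem_ofPred_eq, ← div_eq_inv_mul, lt_div_iff₀ hc0]
  constructor
  · rintro ⟨hx, hxy, hyx⟩
    exact ⟨by linarith, by linarith⟩
  · rintro ⟨hxy, hyx⟩
    have hx : 0 < x * (1 - c ^ 2) := by nlinarith [mul_pos hc0 hyx]
    have hx : 0 < x := pos_of_mul_pos_left hx (by nlinarith)
    exact ⟨hx, by linarith, by linarith⟩

lemma setOf_sign_eq_sign {c : ℝ} (hc0 : 0 < c) (hc1 : c < 1) :
    {p : ℝ × ℝ | Real.sign (p.1 - c * p.2) = Real.sign (p.2 - c * p.1)} =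
      {q | 0 < q.1 ∧ c * q.1 < q.2 ∧ q.2 < c⁻¹ * q.1} ∪
        -{q | 0 < q.1 ∧ c * q.1 < q.2 ∧ q.2 < c⁻¹ * q.1} ∪ {0} := by
  ext ⟨x, y⟩
  have hneg : (0 < -x - c * -y ∧ 0 < -y - c * -x) ↔ (x - c * y < 0 ∧ y - c * x < 0) := by
    constructor <;> rintro ⟨h1, h2⟩ <;> constructor <;> linarith
  have hzero : (x - c * y = 0 ∧ y - c * x = 0) ↔ (x = 0 ∧ y = 0) := by
    refine ⟨fun ⟨h1, h2⟩ => ?_, fun ⟨hx, hy⟩ => by simp [hx, hy]⟩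
    have hx : x * (1 - c ^ 2) = 0 := by linear_combination h1 + c * h2
    have hx : x = 0 := (mul_eq_zero.mp hx).resolve_right (by nlinarith)
    exact ⟨hx, by simpa [hx] using h2⟩
  simp only [mem_union, mem_neg, Prod.neg_mk, mk_mem_cone_iff hc0 hc1, mem_singleton_iff,
    Prod.mk_eq_zero, mem_ofPred_eq, real_sign_eq_real_sign_iff, hneg, hzero]
  tauto

lemma gaussianReal_prod_real_sign_ne {c : ℝ} (hc0 : 0 < c) (hc1 : c < 1) :
    (γ₂).real {p : ℝ × ℝ | Real.sign (p.1 - c * p.2) ≠ Real.sign (p.2 - c * p.1)} =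
      1 / 2 + 2 / π * arctan c := by
  set K := {q : ℝ × ℝ | 0 < q.1 ∧ c * q.1 < q.2 ∧ q.2 < c⁻¹ * q.1}
  have hK : MeasurableSet K := measurableSet_cone c c⁻¹
  have hKreal : (γ₂).real K = (π / 2 - 2 * arctan c) / (2 * π) := by
    rw [gaussianReal_prod_real_cone (hc1.le.trans ((one_le_inv₀ hc0).mpr hc1.le)),
      arctan_inv_of_pos hc0]
    ring
  have hdisj : Disjoint K (-K) :=
    disjoint_left.mpr fun p hp hp' => by linarith [hp.1, show 0 < -p.1 from hp'.1]
  have hnull : ({0} : Set (ℝ × ℝ)) =ᵐ[γ₂] (∅ : Set (ℝ × ℝ)) := by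
    have := nullSingletonClass_gaussianReal (μ := 0) one_ne_zero
    exact ae_eq_empty.mpr (measure_singleton 0)
  have heq : (γ₂).real {p : ℝ × ℝ | Real.sign (p.1 - c * p.2) = Real.sign (p.2 - c * p.1)} =
      2 * (γ₂).real K := by
    rw [setOf_sign_eq_sign hc0 hc1, measureReal_congr (union_ae_eq_left_of_ae_eq_empty hnull),
      measureReal_union hdisj hK.neg, measureReal_def (s := -K), Measure.measure_neg,
      ← measureReal_def]
    ring
  have hmeas : MeasurableSet
      {p : ℝ × ℝ | Real.sign (p.1 - c * p.2) = Real.sign (p.2 - c * p.1)} :=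
    measurableSet_eq_fun (measurable_real_sign.comp (by fun_prop))
      (measurable_real_sign.comp (by fun_prop))
  rw [← compl_ofPred, measureReal_compl hmeas, probReal_univ, heq, hKreal]
  field_simp
  ring

lemma one_div_sqrt_le_arctan_one_div_sqrt_sub_one {D : ℝ} (hD : 1 < D) :
    1 / √D ≤ arctan (1 / √(D - 1)) := by
  have hD1 : 0 < D - 1 := sub_pos.mpr hD
  have hsD1 : 0 < √(D - 1) := sqrt_pos.mpr hD1
  have hsin : sin (arctan (1 / √(D - 1))) = 1 / √D := by
    have h : 1 + (1 / √(D - 1)) ^ 2 = D / (D - 1) := by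
      rw [div_pow, one_pow, sq_sqrt hD1.le]
      field_simp
      ring
    rw [sin_arctan, h, sqrt_div (by linarith)]
    field_simp
  calc 1 / √D = sin (arctan (1 / √(D - 1))) := hsin.symm
    _ ≤ arctan (1 / √(D - 1)) := sin_le (arctan_nonneg.mpr (by positivity))

theorem sign_prob_ne {Ω : Type*} [MeasurableSpace Ω] (μ : Measure Ω) [IsProbabilityMeasure μ]
    (P Q : Ω → ℝ) (hPm : Measurable P) (hQm : Measurable Q)
    (hP : μ.map P = gaussianReal 0 1) (hQ : μ.map Q = gaussianReal 0 1)
    (hind : IndepFun P Q μ) (D : ℝ) (hD : 2 < D) :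
    (μ {ω | Real.sign (P ω - Q ω / Real.sqrt (D - 1)) ≠
        Real.sign (Q ω - P ω / Real.sqrt (D - 1))}).toReal =
      1 / 2 + (2 / π) * Real.arctan (1 / Real.sqrt (D - 1)) ∧
    1 / 2 + (2 / π) * (1 / Real.sqrt D) ≤
      1 / 2 + (2 / π) * Real.arctan (1 / Real.sqrt (D - 1)) := by
  set c := 1 / √(D - 1)
  have hs : 1 < √(D - 1) := by rw [lt_sqrt zero_le_one]; linarith
  have hc0 : 0 < c := by positivity
  have hc1 : c < 1 := (div_lt_one (by linarith)).mpr hs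
  have hlaw : μ.map (fun ω => (P ω, Q ω)) = γ₂ := by
    rw [(indepFun_iff_map_prod_eq_prod_map_map hPm.aemeasurable hQm.aemeasurable).mp hind, hP, hQ]
  have hmeas : MeasurableSet
      {p : ℝ × ℝ | Real.sign (p.1 - c * p.2) ≠ Real.sign (p.2 - c * p.1)} :=
    (measurableSet_eq_fun (measurable_real_sign.comp (by fun_prop))
      (measurable_real_sign.comp (by fun_prop))).compl
  have hevent : {ω | Real.sign (P ω - Q ω / √(D - 1)) ≠ Real.sign (Q ω - P ω / √(D - 1))} =
      (fun ω => (P ω, Q ω)) ⁻¹'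
        {p : ℝ × ℝ | Real.sign (p.1 - c * p.2) ≠ Real.sign (p.2 - c * p.1)} := by
    simp only [c, one_div_mul_eq_div]
    rfl
  refine ⟨?_, by gcongr; exact one_div_sqrt_le_arctan_one_div_sqrt_sub_one (by linarith)⟩
  rw [hevent, ← measureReal_def, ← map_measureReal_apply (hPm.prodMk hQm) hmeas, hlaw,
    gaussianReal_prod_real_sign_ne hc0 hc1]
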